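/- For all r in (0,1], the function δ(r) = (1 − I₀(r)²)·log r − (γ − log 2)·I₀(r)² + I₀(r)·∑_{k≥1} H_k (r²/4)^k/(k!)² satisfies δ(r) ≤ 1. -/

import Mathlib

open Real MeasureTheory Filter Set

noncomputable def besselI0 (r : ℝ) : ℝ :=
  ∑' k : ℕ, (r ^ 2 / 4) ^ k / (Nat.factorial k : ℝ) ^ 2

noncomputable def besselK0Series (r : ℝ) : ℝ :=
  ∑' k : ℕ, (harmonic (k + 1) : ℝ) * (r ^ 2 / 4) ^ (k + 1) / (Nat.factorial (k + 1) : ℝ) ^ 2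

noncomputable def besselK0 (r : ℝ) : ℝ :=
  -(Real.log (r / 2) + Real.eulerMascheroniConstant) * besselI0 r + besselK0Series r

/-! Both power series in `x = r² / 4` have coefficients in `[0, 1]` beyond the constant term, so
they are dominated by the geometric series: `I₀(r) - 1` and `∑ H_k xᵏ / (k!)²` are at most
`x / (1 - x) ≤ r² / 3` on `(0, 1]`. Together with `-r² log r ≤ r - r² ≤ 1/4`, `γ > 1/2` and
`log 2 < 0.6931471808`, the three terms of `δ(r)` are at most `7/36`, `(16/9) · 0.1931471808` and
`4/9`, whose sum is about `0.98`. -/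

open scoped Nat

lemma harmonic_le_self (n : ℕ) : harmonic n ≤ n := by
  calc harmonic n ≤ ∑ _i ∈ Finset.range n, (1 : ℚ) :=
        Finset.sum_le_sum fun i _ => inv_le_one_of_one_le₀ (by simp)
    _ = n := by simp

lemma harmonic_le_factorial_sq (n : ℕ) : (harmonic n : ℝ) ≤ (n ! : ℝ) ^ 2 := by
  have h : n ≤ n ! ^ 2 := n.self_le_factorial.trans (Nat.le_self_pow two_ne_zero _)
  calc (harmonic n : ℝ) ≤ n := by exact_mod_cast harmonic_le_self n
    _ ≤ (n ! : ℝ) ^ 2 := by exact_mod_cast h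

lemma tsum_le_div_one_sub_of_le_pow_succ {x : ℝ} {a : ℕ → ℝ} (hx0 : 0 ≤ x) (hx1 : x < 1)
    (ha0 : ∀ k, 0 ≤ a k) (ha : ∀ k, a k ≤ x ^ (k + 1)) : ∑' k, a k ≤ x / (1 - x) := by
  have hgeom : Summable fun k : ℕ => x ^ (k + 1) :=
    (summable_nat_add_iff 1).mpr (summable_geometric_of_lt_one hx0 hx1)
  calc ∑' k, a k ≤ ∑' k : ℕ, x ^ (k + 1) := (hgeom.of_nonneg_of_le ha0 ha).tsum_le_tsum ha hgeom
    _ = x / (1 - x) := by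
      simp_rw [pow_succ, tsum_mul_right, tsum_geometric_of_lt_one hx0 hx1, div_eq_inv_mul]

lemma summable_besselI0_term (r : ℝ) :
    Summable fun k : ℕ => (r ^ 2 / 4) ^ k / (k ! : ℝ) ^ 2 := by
  refine (Real.summable_pow_div_factorial (r ^ 2 / 4)).of_nonneg_of_le (fun k => by positivity)
    fun k => div_le_div_of_nonneg_left (by positivity) (by positivity) ?_
  have h : (1 : ℝ) ≤ k ! := by exact_mod_cast k.factorial_pos
  nlinarith

lemma besselI0_eq_one_add_tsum (r : ℝ) :
    besselI0 r = 1 + ∑' k : ℕ, (r ^ 2 / 4) ^ (k + 1) / ((k + 1)! : ℝ) ^ 2 := by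
  rw [besselI0, (summable_besselI0_term r).tsum_eq_zero_add]
  simp

lemma one_le_besselI0 (r : ℝ) : 1 ≤ besselI0 r := by
  rw [besselI0_eq_one_add_tsum]
  have : 0 ≤ ∑' k : ℕ, (r ^ 2 / 4) ^ (k + 1) / ((k + 1)! : ℝ) ^ 2 :=
    tsum_nonneg fun k => by positivity
  linarith

lemma besselI0_sub_one_le {r : ℝ} (hr : r ^ 2 < 4) :
    besselI0 r - 1 ≤ r ^ 2 / 4 / (1 - r ^ 2 / 4) := by
  rw [besselI0_eq_one_add_tsum, add_sub_cancel_left]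
  refine tsum_le_div_one_sub_of_le_pow_succ (by positivity) (by linarith)
    (fun k => by positivity) fun k => div_le_self (by positivity) ?_
  exact_mod_cast Nat.one_le_pow _ _ (k + 1).factorial_pos

lemma besselK0Series_nonneg (r : ℝ) : 0 ≤ besselK0Series r :=
  tsum_nonneg fun k => by
    have := harmonic_pos k.succ_ne_zero
    positivity

lemma besselK0Series_le {r : ℝ} (hr : r ^ 2 < 4) :
    besselK0Series r ≤ r ^ 2 / 4 / (1 - r ^ 2 / 4) := by
  refine tsum_le_div_one_sub_of_le_pow_succ (by positivity) (by linarith) (fun k => by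
    have := harmonic_pos k.succ_ne_zero
    positivity) fun k => ?_
  rw [mul_div_right_comm]
  refine mul_le_of_le_one_left (by positivity) ?_
  exact div_le_one_of_le₀ (harmonic_le_factorial_sq (k + 1)) (by positivity)

lemma neg_sq_mul_log_le (r : ℝ) : -(r ^ 2 * log r) ≤ 1 / 4 := by
  rcases eq_or_ne r 0 with rfl | hr
  · norm_num
  have hpos : 0 < |r| := abs_pos.mpr hr
  have hlog : 1 - |r|⁻¹ ≤ log |r| := one_sub_inv_le_log_of_pos hpos
  rw [← log_abs, ← sq_abs]
  have : |r| ^ 2 * (1 - |r|⁻¹) = |r| ^ 2 - |r| := by field_simp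
  nlinarith [mul_le_mul_of_nonneg_left hlog (sq_nonneg |r|), sq_nonneg (|r| - 1 / 2)]

theorem stmt_16 :
    ∀ r ∈ Set.Ioc (0:ℝ) 1,
      (1 - besselI0 r ^ 2) * Real.log r
        - (Real.eulerMascheroniConstant - Real.log 2) * besselI0 r ^ 2
        + besselI0 r * besselK0Series r ≤ 1 := by
  rintro r ⟨hr0, hr1⟩
  have hr2 : r ^ 2 ≤ 1 := pow_le_one₀ hr0.le hr1
  have hgeom : r ^ 2 / 4 / (1 - r ^ 2 / 4) ≤ r ^ 2 / 3 := by
    rw [div_le_iff₀ (by linarith)]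
    nlinarith
  have hI1 := one_le_besselI0 r
  have hI : besselI0 r - 1 ≤ r ^ 2 / 3 := (besselI0_sub_one_le (by linarith)).trans hgeom
  have hS0 := besselK0Series_nonneg r
  have hS : besselK0Series r ≤ r ^ 2 / 3 := (besselK0Series_le (by linarith)).trans hgeom
  have hL : log r ≤ 0 := log_nonpos hr0.le hr1
  have hrL := neg_sq_mul_log_le r
  have hγ := one_half_lt_eulerMascheroniConstant
  have hlog2 := log_two_lt_d9
  have hA : (1 - besselI0 r ^ 2) * log r ≤ 7 / 36 := by
    have h : besselI0 r ^ 2 - 1 ≤ 7 / 9 * r ^ 2 := by nlinarith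
    nlinarith [mul_le_mul_of_nonneg_right h (neg_nonneg.mpr hL)]
  have hB : -(eulerMascheroniConstant - log 2) * besselI0 r ^ 2 ≤ 0.1931471808 * (16 / 9) := by
    have h : besselI0 r ^ 2 ≤ 16 / 9 := by nlinarith
    nlinarith
  have hC : besselI0 r * besselK0Series r ≤ 4 / 9 := by nlinarith
  linarith
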